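/- Fix g₁, g₂ ∈ E₊(𝔣) generating a free rank-2 finite-index subgroup of E₊(𝔣), let i ∈ {1,2} and let l ≥ 1 be an integer. Suppose the real number Dᵢ′ := (2·g_i(2)^{−l} − g_i(1)^{−l} − g_i(3)^{−l})·log g₂(1) − (2·g_i(1)^{−l} − g_i(2)^{−l} − g_i(3)^{−l})·log g₂(2) is nonzero. Then the slope of the curve 𝒞_{i,l} at t = 1 satisfies lim_{t→1⁻} (y_{i,l}(t) − y_{i,l}(1))/(x_{i,l}(t) − x_{i,l}(1)) = −[(2·g_i(2)^{−l} − g_i(1)^{−l} − g_i(3)^{−l})·log g₁(1) − (2·g_i(1)^{−l} − g_i(2)^{−l} − g_i(3)^{−l})·log g₁(2)] / Dᵢ′. -/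

import Mathlib

noncomputable section

open Filter Set

/-- `ℝ³`, the target of the embedding of the totally real cubic field `F`
via its three real embeddings. -/
abbrev V3 := Fin 3 → ℝ

/-- All coordinates positive (totally positive). -/
def IsPos (x : V3) : Prop := ∀ i, 0 < x i

/-- Coordinatewise logarithm `Log`. -/
def Log3 (x : V3) : V3 := fun i => Real.log (x i)

/-- `l_i(M)`: the vector in the trace-zero hyperplane with entry `M` in place `i`
and `-M/2` in the other places. -/
def lvec (i : Fin 3) (M : ℝ) : V3 := fun j => if j = i then M else -M / 2

/-- `δ(x₁,x₂,x₃)`: sign of the determinant of the matrix with columns `x₁, x₂, x₃`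
(with `sign 0 = 0`). -/
def delta3 (x₁ x₂ x₃ : V3) : ℝ :=
  Real.sign (Matrix.det (Matrix.of fun i j : Fin 3 => ![x₁ i, x₂ i, x₃ i] j))

/-- `δ([x ∣ y]) = δ(1, x, x·y)`. -/
def deltaB (x y : V3) : ℝ := delta3 1 x (x * y)

/-- Projection `z ↦ z_ℋ = (z₁z₂z₃)^(-1/3)·z`. -/
def projH (x : V3) : V3 := fun i => (x 0 * x 1 * x 2) ^ (-(1 / 3) : ℝ) * x i

/-- Abstraction of `E₊(𝔣)`: a group of totally positive vectors of norm one whose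
`Log`-image is a full lattice in the trace-zero hyperplane `ℋ`. -/
def IsUnitLattice (E : Subgroup V3ˣ) : Prop :=
  (∀ u ∈ E, IsPos (u : V3)) ∧
  (∀ u ∈ E, Log3 (u : V3) 0 + Log3 (u : V3) 1 + Log3 (u : V3) 2 = 0) ∧
  ∃ u ∈ E, ∃ v ∈ E, LinearIndependent ℝ ![Log3 (u : V3), Log3 (v : V3)] ∧
    ∀ w ∈ E, ∃ m n : ℤ, Log3 (w : V3) = (m : ℝ) • Log3 (u : V3) + (n : ℝ) • Log3 (v : V3)

/-- `⟨g₁, g₂⟩` is a subgroup of `E`, free of rank `2` and of finite index in `E`. -/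
def FreeRank2FinIndex (E : Subgroup V3ˣ) (g₁ g₂ : V3ˣ) : Prop :=
  g₁ ∈ E ∧ g₂ ∈ E ∧
  (∀ m n : ℤ, g₁ ^ m * g₂ ^ n = 1 → m = 0 ∧ n = 0) ∧
  (Subgroup.closure {g₁, g₂}).relIndex E ≠ 0

/-- Open simplicial cone on one generator (a ray). -/
def cone1 (v : V3) : Set V3 := {x | ∃ c : ℝ, 0 < c ∧ x = c • v}

/-- Open simplicial cone on two generators. -/
def cone2 (v w : V3) : Set V3 := {x | ∃ c d : ℝ, 0 < c ∧ 0 < d ∧ x = c • v + d • w}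

/-- Open simplicial cone on three generators. -/
def cone3 (v w z : V3) : Set V3 :=
  {x | ∃ c d e : ℝ, 0 < c ∧ 0 < d ∧ 0 < e ∧ x = c • v + d • w + e • z}

/-- `C([x ∣ y]) = C(1, x, x·y)`. -/
def coneB (x y : V3) : Set V3 := cone3 1 x (x * y)

/-- The first standard basis vector of `ℝ³`. -/
def eOne : V3 := ![1, 0, 0]

/-- `C̄_{e₁}`-operation: the points of `ℝ³` brought into `S` by every sufficiently
small perturbation by `e₁`. -/
def closE1 (S : Set V3) : Set V3 :=
  {x | ∃ ε : ℝ, 0 < ε ∧ ∀ h : ℝ, 0 < h → h < ε → x + h • eOne ∈ S}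

/-- `C̄_{e₁}([x ∣ y])`. -/
def coneBbar (x y : V3) : Set V3 := closE1 (coneB x y)

/-- Multiplicative translate `v·S` of a subset of `ℝ³` (coordinatewise product). -/
def mulSet (v : V3) (S : Set V3) : Set V3 := (fun x => v * x) '' S

/-- The coordinates of `Log(α_ℋ)`. -/
def logHc (α : V3) (i : Fin 3) : ℝ :=
  Real.log (α i) - (Real.log (α 0) + Real.log (α 1) + Real.log (α 2)) / 3

/-- The projection `φ_{(g₁,g₂)} : ℝ₊³ → ℝ²`, given by the coordinates of `Log(α_ℋ)`
in the basis `(Log g₁, Log g₂)` of `ℋ` (the explicit formula of the paper). -/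
def phi (g₁ g₂ α : V3) : ℝ × ℝ :=
  ((logHc α 1 * Real.log (g₂ 0) - logHc α 0 * Real.log (g₂ 1)) /
      (Real.log (g₂ 0) * Real.log (g₁ 1) - Real.log (g₂ 1) * Real.log (g₁ 0)),
    (logHc α 1 * Real.log (g₁ 0) - logHc α 0 * Real.log (g₁ 1)) /
      (Real.log (g₁ 0) * Real.log (g₂ 1) - Real.log (g₁ 1) * Real.log (g₂ 0)))

/-- The straight segment `L(t)` from `(1,1,1)` to `v`. -/
def seg (v : V3) (t : ℝ) : V3 := fun j => 1 + t * (v j - 1)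

/-- `x_{i,l}(t)`: first coordinate of `𝒞_{i,l}(t) = φ_{(g₁,g₂)}(L_{i,l}(t))`,
where `g` is `g₁` or `g₂`. -/
def xC (g₁ g₂ g : V3) (l : ℕ) (t : ℝ) : ℝ := (phi g₁ g₂ (seg (g ^ l) t)).1

/-- `y_{i,l}(t)`: second coordinate of `𝒞_{i,l}(t)`. -/
def yC (g₁ g₂ g : V3) (l : ℕ) (t : ℝ) : ℝ := (phi g₁ g₂ (seg (g ^ l) t)).2

/-- The Colmez domain `ℬ = C̄_{e₁}([ε₁∣ε₂]) ∪ C̄_{e₁}([ε₂∣ε₁])`. -/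
def Bbar (ε₁ ε₂ : V3) : Set V3 := coneBbar ε₁ ε₂ ∪ coneBbar ε₂ ε₁

/-- The explicit cone decomposition of `ℬ` with chosen boundary cones. -/
def BsetC (ε₁ ε₂ : V3) : Set V3 :=
  cone1 1 ∪ cone2 1 ε₁ ∪ cone2 1 ε₂ ∪ cone2 1 (ε₁ * ε₂) ∪
    cone3 1 ε₁ (ε₁ * ε₂) ∪ cone3 1 ε₂ (ε₁ * ε₂)

/-- The explicit cone decomposition of `ℬ₁`. -/
def B1setC (ε₂ π : V3) : Set V3 :=
  cone1 π ∪ cone2 π (ε₂ * π) ∪ cone2 1 π ∪ cone2 1 (ε₂ * π) ∪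
    cone3 1 ε₂ (ε₂ * π) ∪ cone3 1 π (ε₂ * π)

/-- The explicit cone decomposition of `ℬ₂`. -/
def B2setC (ε₁ π : V3) : Set V3 :=
  cone1 π ∪ cone2 π (ε₁ * π) ∪ cone2 1 π ∪ cone2 1 (ε₁ * π) ∪
    cone3 1 ε₁ (ε₁ * π) ∪ cone3 1 π (ε₁ * π)

/-! Both coordinates of `𝒞_{i,l}` are differentiable at `t = 1`, so the difference quotient
tends to `y'(1) / x'(1)`. Since `d/dt log (1 + t (v_j - 1)) = 1 - v_j⁻¹` at `t = 1`, one finds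
`x'(1) = -Dᵢ′ / (3m)` and `y'(1) = Nᵢ / (3m)`, where `-Nᵢ / Dᵢ′` is the claimed slope and
`m = log g₂(1) log g₁(2) - log g₂(2) log g₁(1)`. The minor `m` is nonzero: it is the
corresponding minor for a basis `(Log u, Log v)` of `Log E` (nonzero, since a trace-zero vector
is determined by two coordinates) times the integer determinant expressing `Log g₁, Log g₂` in
that basis, and this determinant vanishes only if `g₁^P g₂^Q = 1` for some `(P, Q) ≠ 0`. -/

open Topology

lemma det_two_ne_zero_of_rows_independent {R : Type*} [CommRing R] [IsDomain R] {a b c d : R}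
    (h : ∀ P Q : R, P * a + Q * c = 0 → P * b + Q * d = 0 → P = 0 ∧ Q = 0) :
    a * d - b * c ≠ 0 := by
  intro hdet
  obtain ⟨w, hw, hwM⟩ := Matrix.exists_vecMul_eq_zero_iff.mpr
    (show (!![a, b; c, d]).det = 0 by rwa [Matrix.det_fin_two_of])
  have h0 : w 0 * a + w 1 * c = 0 := by simpa [Matrix.vecMul, dotProduct] using congrFun hwM 0
  have h1 : w 0 * b + w 1 * d = 0 := by simpa [Matrix.vecMul, dotProduct] using congrFun hwM 1
  obtain ⟨hw0, hw1⟩ := h _ _ h0 h1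
  exact hw (by ext i; fin_cases i <;> assumption)

lemma minor_ne_zero_of_linearIndependent {U V : V3} (hUV : LinearIndependent ℝ ![U, V])
    (hU : U 0 + U 1 + U 2 = 0) (hV : V 0 + V 1 + V 2 = 0) :
    U 0 * V 1 - U 1 * V 0 ≠ 0 := by
  refine det_two_ne_zero_of_rows_independent fun P Q h0 h1 =>
    LinearIndependent.pair_iff.mp hUV P Q (funext fun j => ?_)
  fin_cases j
  · simpa using h0
  · simpa using h1
  · simp only [Fin.reduceFinMk, Pi.add_apply, Pi.smul_apply, smul_eq_mul, Pi.zero_apply]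
    linear_combination P * hU + Q * hV - h0 - h1

lemma log3_zpow_mul_zpow (u v : V3ˣ) (P Q : ℤ) :
    Log3 ((u ^ P * v ^ Q : V3ˣ) : V3) = (P : ℝ) • Log3 (u : V3) + (Q : ℝ) • Log3 (v : V3) := by
  funext j
  have hu : (u : V3) j ≠ 0 := (u.isUnit.map (Pi.evalMonoidHom (fun _ => ℝ) j)).ne_zero
  have hv : (v : V3) j ≠ 0 := (v.isUnit.map (Pi.evalMonoidHom (fun _ => ℝ) j)).ne_zero
  simp only [Log3, Units.val_mul, Units.val_zpow_eq_zpow_val, Pi.mul_apply, Pi.pow_apply,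
    Pi.add_apply, Pi.smul_apply, smul_eq_mul]
  rw [Real.log_mul (zpow_ne_zero P hu) (zpow_ne_zero Q hv), Real.log_zpow, Real.log_zpow]

lemma eq_one_of_log3_eq_zero {w : V3ˣ} (hw : IsPos (w : V3)) (h : Log3 (w : V3) = 0) : w = 1 :=
  Units.ext <| funext fun j => Real.eq_one_of_pos_of_log_eq_zero (hw j) (congrFun h j)

lemma log_minor_ne_zero {E : Subgroup V3ˣ} (hE : IsUnitLattice E) {g₁ g₂ : V3ˣ}
    (hfree : FreeRank2FinIndex E g₁ g₂) :
    Real.log ((g₂ : V3) 0) * Real.log ((g₁ : V3) 1) -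
      Real.log ((g₂ : V3) 1) * Real.log ((g₁ : V3) 0) ≠ 0 := by
  obtain ⟨hpos, htr, u, hu, v, hv, huv, hlat⟩ := hE
  obtain ⟨h₁, h₂, hrel, -⟩ := hfree
  obtain ⟨m₁, n₁, hg₁⟩ := hlat g₁ h₁
  obtain ⟨m₂, n₂, hg₂⟩ := hlat g₂ h₂
  have hM : m₁ * n₂ - n₁ * m₂ ≠ 0 := by
    refine det_two_ne_zero_of_rows_independent fun P Q hm hn => hrel P Q ?_
    refine eq_one_of_log3_eq_zero (hpos _ (mul_mem (zpow_mem h₁ P) (zpow_mem h₂ Q))) ?_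
    calc Log3 ((g₁ ^ P * g₂ ^ Q : V3ˣ) : V3)
        = ((P * m₁ + Q * m₂ : ℤ) : ℝ) • Log3 (u : V3) +
            ((P * n₁ + Q * n₂ : ℤ) : ℝ) • Log3 (v : V3) := by
          rw [log3_zpow_mul_zpow, hg₁, hg₂]
          push_cast
          module
      _ = 0 := by rw [hm, hn]; simp
  have hmod : Real.log ((g₂ : V3) 0) * Real.log ((g₁ : V3) 1) -
      Real.log ((g₂ : V3) 1) * Real.log ((g₁ : V3) 0) =
      -((m₁ * n₂ - n₁ * m₂ : ℤ) : ℝ) *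
        (Log3 (u : V3) 0 * Log3 (v : V3) 1 - Log3 (u : V3) 1 * Log3 (v : V3) 0) := by
    change Log3 (g₂ : V3) 0 * Log3 (g₁ : V3) 1 - Log3 (g₂ : V3) 1 * Log3 (g₁ : V3) 0 = _
    rw [hg₁, hg₂]
    simp only [Pi.add_apply, Pi.smul_apply, smul_eq_mul]
    push_cast
    ring
  rw [hmod]
  exact mul_ne_zero (neg_ne_zero.mpr (by exact_mod_cast hM))
    (minor_ne_zero_of_linearIndependent huv (htr u hu) (htr v hv))

lemma HasDerivAt.tendsto_div_sub_div_sub {𝕜 : Type*} [NontriviallyNormedField 𝕜]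
    {f g : 𝕜 → 𝕜} {f' g' a : 𝕜} (hf : HasDerivAt f f' a) (hg : HasDerivAt g g' a) (hg' : g' ≠ 0) :
    Tendsto (fun t => (f t - f a) / (g t - g a)) (𝓝[≠] a) (𝓝 (f' / g')) := by
  refine ((hasDerivAt_iff_tendsto_slope.mp hf).div
    (hasDerivAt_iff_tendsto_slope.mp hg) hg').congr' ?_
  filter_upwards [self_mem_nhdsWithin] with t ht
  rw [Pi.div_apply, slope_def_field, slope_def_field,
    div_div_div_cancel_right₀ (sub_ne_zero.mpr ht)]

lemma hasDerivAt_log_seg {v : V3} {j : Fin 3} (hv : v j ≠ 0) :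
    HasDerivAt (fun t => Real.log (seg v t j)) (1 - (v j)⁻¹) 1 := by
  have hseg : HasDerivAt (fun t => seg v t j) (v j - 1) 1 := by
    simpa [seg] using ((hasDerivAt_id (1 : ℝ)).mul_const (v j - 1)).const_add 1
  have hseg₁ : seg v 1 j = v j := by simp [seg]
  refine (hseg.log (hseg₁ ▸ hv)).congr_deriv ?_
  rw [hseg₁]
  field_simp

lemma hasDerivAt_logHc_seg {v : V3} (hv : ∀ j, v j ≠ 0) (i : Fin 3) :
    HasDerivAt (fun t => logHc (seg v t) i) (((v 0)⁻¹ + (v 1)⁻¹ + (v 2)⁻¹) / 3 - (v i)⁻¹) 1 :=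
  ((hasDerivAt_log_seg (hv i)).sub ((((hasDerivAt_log_seg (hv 0)).add
    (hasDerivAt_log_seg (hv 1))).add (hasDerivAt_log_seg (hv 2))).div_const 3)).congr_deriv
    (by ring)

/-- `-3` times the derivative at `t = 1` of `logHc (seg v t) 1 * a - logHc (seg v t) 0 * b`;
for `v = g^l` and `(a, b) = (log g₂(1), log g₂(2))` this is the paper's `Dᵢ′`. -/
def slopeCoeff (v : V3) (a b : ℝ) : ℝ :=
  (2 * (v 1)⁻¹ - (v 0)⁻¹ - (v 2)⁻¹) * a - (2 * (v 0)⁻¹ - (v 1)⁻¹ - (v 2)⁻¹) * b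

lemma hasDerivAt_phi_seg {v : V3} (hv : ∀ j, v j ≠ 0) (c d e : ℝ) :
    HasDerivAt (fun t => (logHc (seg v t) 1 * c - logHc (seg v t) 0 * d) / e)
      (-slopeCoeff v c d / (3 * e)) 1 :=
  ((((hasDerivAt_logHc_seg hv 1).mul_const c).sub
    ((hasDerivAt_logHc_seg hv 0).mul_const d)).div_const e).congr_deriv
    (by rw [slopeCoeff]; ring)

lemma tendsto_slope_phi_seg {g₁ g₂ v : V3} (hv : ∀ j, v j ≠ 0)
    (hdet : Real.log (g₂ 0) * Real.log (g₁ 1) - Real.log (g₂ 1) * Real.log (g₁ 0) ≠ 0)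
    (hD : slopeCoeff v (Real.log (g₂ 0)) (Real.log (g₂ 1)) ≠ 0) :
    Tendsto (fun t => ((phi g₁ g₂ (seg v t)).2 - (phi g₁ g₂ (seg v 1)).2) /
        ((phi g₁ g₂ (seg v t)).1 - (phi g₁ g₂ (seg v 1)).1)) (𝓝[≠] 1)
      (𝓝 (-(slopeCoeff v (Real.log (g₁ 0)) (Real.log (g₁ 1)) /
        slopeCoeff v (Real.log (g₂ 0)) (Real.log (g₂ 1))))) := by
  have hx : HasDerivAt (fun t => (phi g₁ g₂ (seg v t)).1) _ 1 :=
    hasDerivAt_phi_seg hv (Real.log (g₂ 0)) (Real.log (g₂ 1))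
      (Real.log (g₂ 0) * Real.log (g₁ 1) - Real.log (g₂ 1) * Real.log (g₁ 0))
  have hy : HasDerivAt (fun t => (phi g₁ g₂ (seg v t)).2) _ 1 :=
    hasDerivAt_phi_seg hv (Real.log (g₁ 0)) (Real.log (g₁ 1))
      (Real.log (g₁ 0) * Real.log (g₂ 1) - Real.log (g₁ 1) * Real.log (g₂ 0))
  convert hy.tendsto_div_sub_div_sub hx
    (div_ne_zero (neg_ne_zero.mpr hD) (mul_ne_zero three_ne_zero hdet)) using 2
  rw [show Real.log (g₁ 0) * Real.log (g₂ 1) - Real.log (g₁ 1) * Real.log (g₂ 0) =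
      -(Real.log (g₂ 0) * Real.log (g₁ 1) - Real.log (g₂ 1) * Real.log (g₁ 0)) by ring]
  generalize Real.log (g₂ 0) * Real.log (g₁ 1) - Real.log (g₂ 1) * Real.log (g₁ 0) = d
    at hdet ⊢
  field_simp

theorem stmt4_general (E : Subgroup V3ˣ) (hE : IsUnitLattice E) (g₁ g₂ : V3ˣ)
    (hfree : FreeRank2FinIndex E g₁ g₂) (g : V3)
    (hg : g = (g₁ : V3) ∨ g = (g₂ : V3)) (l : ℕ)
    (hD : (2 * (g 1 ^ l)⁻¹ - (g 0 ^ l)⁻¹ - (g 2 ^ l)⁻¹) * Real.log ((g₂ : V3) 0) -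
        (2 * (g 0 ^ l)⁻¹ - (g 1 ^ l)⁻¹ - (g 2 ^ l)⁻¹) * Real.log ((g₂ : V3) 1) ≠ 0) :
    Filter.Tendsto
      (fun t : ℝ =>
        (yC (g₁ : V3) (g₂ : V3) g l t - yC (g₁ : V3) (g₂ : V3) g l 1) /
          (xC (g₁ : V3) (g₂ : V3) g l t - xC (g₁ : V3) (g₂ : V3) g l 1))
      (nhdsWithin 1 (Set.Iio 1))
      (nhds (-(((2 * (g 1 ^ l)⁻¹ - (g 0 ^ l)⁻¹ - (g 2 ^ l)⁻¹) * Real.log ((g₁ : V3) 0) -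
          (2 * (g 0 ^ l)⁻¹ - (g 1 ^ l)⁻¹ - (g 2 ^ l)⁻¹) * Real.log ((g₁ : V3) 1)) /
        ((2 * (g 1 ^ l)⁻¹ - (g 0 ^ l)⁻¹ - (g 2 ^ l)⁻¹) * Real.log ((g₂ : V3) 0) -
          (2 * (g 0 ^ l)⁻¹ - (g 1 ^ l)⁻¹ - (g 2 ^ l)⁻¹) * Real.log ((g₂ : V3) 1))))) := by
  have hg_pos : IsPos g := by
    rcases hg with rfl | rfl
    exacts [hE.1 g₁ hfree.1, hE.1 g₂ hfree.2.1]
  exact (tendsto_slope_phi_seg (fun j => (pow_pos (hg_pos j) l).ne')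
    (log_minor_ne_zero hE hfree) hD).mono_left (nhdsLT_le_nhdsNE 1)

/-- the slope of the curve `𝒞_{i,l}` at `t = 1`. -/
theorem stmt4 (E : Subgroup V3ˣ) (hE : IsUnitLattice E) (g₁ g₂ : V3ˣ)
    (hfree : FreeRank2FinIndex E g₁ g₂) (g : V3)
    (hg : g = (g₁ : V3) ∨ g = (g₂ : V3)) (l : ℕ) (hl : 1 ≤ l)
    (hD : (2 * (g 1 ^ l)⁻¹ - (g 0 ^ l)⁻¹ - (g 2 ^ l)⁻¹) * Real.log ((g₂ : V3) 0) -
        (2 * (g 0 ^ l)⁻¹ - (g 1 ^ l)⁻¹ - (g 2 ^ l)⁻¹) * Real.log ((g₂ : V3) 1) ≠ 0) :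
    Filter.Tendsto
      (fun t : ℝ =>
        (yC (g₁ : V3) (g₂ : V3) g l t - yC (g₁ : V3) (g₂ : V3) g l 1) /
          (xC (g₁ : V3) (g₂ : V3) g l t - xC (g₁ : V3) (g₂ : V3) g l 1))
      (nhdsWithin 1 (Set.Iio 1))
      (nhds (-(((2 * (g 1 ^ l)⁻¹ - (g 0 ^ l)⁻¹ - (g 2 ^ l)⁻¹) * Real.log ((g₁ : V3) 0) -
          (2 * (g 0 ^ l)⁻¹ - (g 1 ^ l)⁻¹ - (g 2 ^ l)⁻¹) * Real.log ((g₁ : V3) 1)) /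
        ((2 * (g 1 ^ l)⁻¹ - (g 0 ^ l)⁻¹ - (g 2 ^ l)⁻¹) * Real.log ((g₂ : V3) 0) -
          (2 * (g 0 ^ l)⁻¹ - (g 1 ^ l)⁻¹ - (g 2 ^ l)⁻¹) * Real.log ((g₂ : V3) 1))))) :=
  stmt4_general E hE g₁ g₂ hfree g hg l hD
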